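/- arXiv:1710.10183 — 7 statements merged into one kernel-verified Lean document; each statement's English description precedes it below -/
import Mathlib

section
/- Let A and B be bounded lattices each with more than 2 elements, and let A ⊞ B be their horizontal sum (glueing A and B at 0 and at 1). If F is a filter of A ⊞ B other than the whole lattice, then F is a filter of A not equal to A, or a filter of B not equal to B. -/
/-- A filter of a lattice: a nonempty, upward-closed subset closed under binary meets. -/
def IsLatFilter {L : Type*} [Lattice L] (F : Set L) : Prop :=
  F.Nonempty ∧ (∀ x ∈ F, ∀ y : L, x ≤ y → y ∈ F) ∧ (∀ x ∈ F, ∀ y ∈ F, x ⊓ y ∈ F)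

/-- An ideal of a lattice: a nonempty, downward-closed subset closed under binary joins. -/
def IsLatIdeal {L : Type*} [Lattice L] (I : Set L) : Prop :=
  I.Nonempty ∧ (∀ x ∈ I, ∀ y : L, y ≤ x → y ∈ I) ∧ (∀ x ∈ I, ∀ y ∈ I, x ⊔ y ∈ I)

/-- A prime filter: a proper filter such that `x ⊔ y ∈ P` implies `x ∈ P` or `y ∈ P`. -/
def IsPrimeFilter {L : Type*} [Lattice L] (P : Set L) : Prop :=
  IsLatFilter P ∧ P ≠ Set.univ ∧ ∀ x y : L, x ⊔ y ∈ P → x ∈ P ∨ y ∈ P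

/-- A prime ideal: a proper ideal such that `x ⊓ y ∈ I` implies `x ∈ I` or `y ∈ I`. -/
def IsPrimeIdeal {L : Type*} [Lattice L] (I : Set L) : Prop :=
  IsLatIdeal I ∧ I ≠ Set.univ ∧ ∀ x y : L, x ⊓ y ∈ I → x ∈ I ∨ y ∈ I

/-- A lattice congruence: an equivalence relation compatible with `⊔` and `⊓`. -/
def IsLatCong {L : Type*} [Lattice L] (θ : L → L → Prop) : Prop :=
  Equivalence θ ∧ ∀ a b c d : L, θ a b → θ c d → θ (a ⊔ c) (b ⊔ d) ∧ θ (a ⊓ c) (b ⊓ d)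

/-- `C` is the horizontal sum of its subsets `A` and `B`: both are bounded sublattices,
they cover `C`, they intersect exactly in `{⊥, ⊤}`, and elements of `A \ {⊥, ⊤}` are
incomparable with elements of `B \ {⊥, ⊤}`. -/
structure IsHorizSum {C : Type*} [Lattice C] [BoundedOrder C] (A B : Set C) : Prop where
  botA : ⊥ ∈ A
  topA : ⊤ ∈ A
  botB : ⊥ ∈ B
  topB : ⊤ ∈ B
  subA : ∀ x ∈ A, ∀ y ∈ A, x ⊓ y ∈ A ∧ x ⊔ y ∈ A
  subB : ∀ x ∈ B, ∀ y ∈ B, x ⊓ y ∈ B ∧ x ⊔ y ∈ B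
  union : A ∪ B = Set.univ
  inter : A ∩ B = {⊥, ⊤}
  incomp : ∀ a ∈ A, a ≠ ⊥ → a ≠ ⊤ → ∀ b ∈ B, b ≠ ⊥ → b ≠ ⊤ → ¬ a ≤ b ∧ ¬ b ≤ a

/-- A filter of the sublattice `A` of `C`. -/
def IsFilterOf {C : Type*} [Lattice C] (A : Set C) (F : Set C) : Prop :=
  F.Nonempty ∧ F ⊆ A ∧ (∀ x ∈ F, ∀ y ∈ A, x ≤ y → y ∈ F) ∧ (∀ x ∈ F, ∀ y ∈ F, x ⊓ y ∈ F)

/-- If `F` is a proper filter of the horizontal sum `A ⊞ B` of bounded lattices with more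
than two elements, then `F` is a filter of `A` other than `A`, or a filter of `B` other
than `B`. -/
theorem filter_of_horizSum {C : Type*} [Lattice C] [BoundedOrder C] (A B : Set C)
    (hAB : IsHorizSum A B) (hbt : (⊥ : C) ≠ ⊤)
    (hA : ∃ a ∈ A, a ≠ ⊥ ∧ a ≠ ⊤) (hB : ∃ b ∈ B, b ≠ ⊥ ∧ b ≠ ⊤)
    (F : Set C) (hF : IsLatFilter F) (hFne : F ≠ Set.univ) :
    (IsFilterOf A F ∧ F ≠ A) ∨ (IsFilterOf B F ∧ F ≠ B) := by
  obtain ⟨hne, hup, hmeet⟩ := hF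
  have hbotF : ⊥ ∉ F := by
    intro hb
    apply hFne
    ext x; simp only [Set.mem_univ, iff_true]
    exact hup ⊥ hb x bot_le
  by_cases hFA : F ⊆ A
  · left
    refine ⟨⟨hne, hFA, fun x hx y _ hxy => hup x hx y hxy, hmeet⟩, ?_⟩
    intro h; exact hbotF (h ▸ hAB.botA)
  · right
    obtain ⟨x, hxF, hxA⟩ := Set.not_subset.mp hFA
    have hxB : x ∈ B := by
      have : x ∈ A ∪ B := by rw [hAB.union]; trivial
      rcases this with h | h
      · exact absurd h hxA
      · exact h
    have hxbot : x ≠ ⊥ := by rintro rfl; exact hxA hAB.botA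
    have hxtop : x ≠ ⊤ := by rintro rfl; exact hxA hAB.topA
    have hFB : F ⊆ B := by
      intro y hyF
      by_cases hyB : y ∈ B
      · exact hyB
      have hyA : y ∈ A := by
        rcases (show y ∈ A ∪ B by rw [hAB.union]; trivial) with h | h
        · exact h
        · exact absurd h hyB
      have hybot : y ≠ ⊥ := by rintro rfl; exact hbotF hyF
      have hytop : y ≠ ⊤ := by rintro rfl; exact hyB hAB.topB
      exfalso
      have hmF : y ⊓ x ∈ F := hmeet y hyF x hxF
      have hmAB : y ⊓ x ∈ A ∪ B := by rw [hAB.union]; trivial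
      have hmbot : y ⊓ x ≠ ⊥ := fun h => hbotF (h ▸ hmF)
      have hmtop : y ⊓ x ≠ ⊤ := by
        intro h
        exact hytop (top_le_iff.mp (h ▸ inf_le_left))
      rcases hmAB with hmA | hmB
      · exact (hAB.incomp _ hmA hmbot hmtop x hxB hxbot hxtop).1 inf_le_right
      · exact (hAB.incomp y hyA hybot hytop _ hmB hmbot hmtop).2 inf_le_left
    refine ⟨⟨hne, hFB, fun a ha y _ hle => hup a ha y hle, hmeet⟩, ?_⟩
    intro h; exact hbotF (h ▸ hAB.botB)
end

section
/- For nontrivial bounded lattices A and B each containing an element distinct from 0 and 1, the number of filters of the horizontal sum A ⊞ B equals |Filt(A)| + |Filt(B)| − 2, and dually for ideals. -/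
/-- An ideal of the sublattice `A` of `C`. -/
def IsIdealOf {C : Type*} [Lattice C] (A : Set C) (I : Set C) : Prop :=
  I.Nonempty ∧ I ⊆ A ∧ (∀ x ∈ I, ∀ y ∈ A, y ≤ x → y ∈ I) ∧ (∀ x ∈ I, ∀ y ∈ I, x ⊔ y ∈ I)

/-!
Every filter of the horizontal sum `C = A ⊞ B` other than `C` itself avoids `⊥`, and then it
lies inside `A` or inside `B`: if `a ∈ F \ A` and `b ∈ F \ B`, then `a ⊓ b ∈ F` is a nonzero
element below both, but a nonzero element of `A` (resp. `B`) has only elements of `A`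
(resp. `B`) above it. Conversely the filters of `A` are `A` itself and the proper filters of `C`
inside `A`. So the proper filters of `C` split into those inside `A` and those inside `B`,
overlapping only in `{⊤}`, and the improper filters `C`, `A`, `B` account for the rest.
Ideals are filters of the order dual.
-/

open Set

namespace IsHorizSum

variable {C : Type*} [Lattice C] [BoundedOrder C] {A B : Set C}

theorem symm (h : IsHorizSum A B) : IsHorizSum B A where
  botA := h.botB
  topA := h.topB
  botB := h.botA
  topB := h.topA
  subA := h.subB
  subB := h.subA
  union := union_comm A B ▸ h.union
  inter := inter_comm A B ▸ h.inter
  incomp b hb hb0 hb1 a ha ha0 ha1 := (h.incomp a ha ha0 ha1 b hb hb0 hb1).symm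

theorem dual (h : IsHorizSum A B) : IsHorizSum (C := Cᵒᵈ) A B where
  botA := h.topA
  topA := h.botA
  botB := h.topB
  topB := h.botB
  subA x hx y hy := (h.subA x hx y hy).symm
  subB x hx y hy := (h.subB x hx y hy).symm
  union := h.union
  inter := h.inter.trans (pair_comm _ _)
  incomp a ha ha0 ha1 b hb hb0 hb1 := (h.incomp a ha ha1 ha0 b hb hb1 hb0).symm

theorem mem_right_of_notMem_left (h : IsHorizSum A B) {x : C} (hx : x ∉ A) : x ∈ B :=
  ((h.union ▸ mem_univ x : x ∈ A ∪ B)).resolve_left hx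

theorem mem_of_le (h : IsHorizSum A B) {x y : C} (hx : x ∈ A) (hx0 : x ≠ ⊥) (hxy : x ≤ y) :
    y ∈ A := by
  by_contra hy
  have hy1 : y ≠ ⊤ := fun h' => hy (h' ▸ h.topA)
  have hx1 : x ≠ ⊤ := fun h' => hy1 (top_le_iff.1 (h' ▸ hxy))
  have hy0 : y ≠ ⊥ := fun h' => hy (h' ▸ h.botA)
  exact (h.incomp x hx hx0 hx1 y (h.mem_right_of_notMem_left hy) hy0 hy1).1 hxy

end IsHorizSum

section ProperFilters

variable {C : Type*} [Lattice C]

def properLatFilters (C : Type*) [Lattice C] [OrderBot C] : Set (Set C) :=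
  {F | IsLatFilter F ∧ ⊥ ∉ F}

theorem IsLatFilter.eq_univ_of_bot_mem [OrderBot C] {F : Set C} (hF : IsLatFilter F)
    (h : ⊥ ∈ F) : F = univ :=
  eq_univ_of_forall fun y => hF.2.1 ⊥ h y bot_le

theorem isLatFilter_univ [Nonempty C] : IsLatFilter (univ : Set C) :=
  ⟨univ_nonempty, fun _ _ _ _ => trivial, fun _ _ _ _ => trivial⟩

theorem isLatFilter_singleton_top [OrderTop C] : IsLatFilter ({⊤} : Set C) :=
  ⟨singleton_nonempty _, fun _ hx _ hxy => top_le_iff.1 (hx ▸ hxy),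
    fun _ hx _ hy => by rw [hx, hy, inf_idem]; rfl⟩

theorem univ_notMem_properLatFilters [OrderBot C] : univ ∉ properLatFilters C :=
  fun h => h.2 trivial

theorem setOf_isLatFilter_eq_insert [OrderBot C] : {F : Set C | IsLatFilter F} =
    insert univ (properLatFilters C) := by
  ext F
  by_cases hbot : ⊥ ∈ F
  · exact ⟨fun hF => Or.inl (hF.eq_univ_of_bot_mem hbot),
      fun hF => hF.elim (· ▸ isLatFilter_univ) fun h => absurd hbot h.2⟩
  · have hne : F ≠ univ := fun h => hbot (h ▸ trivial)
    simp [properLatFilters, hbot, hne]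

end ProperFilters

namespace IsHorizSum

variable {C : Type*} [Lattice C] [BoundedOrder C] {A B : Set C}

theorem subset_or_subset (h : IsHorizSum A B) {F : Set C} (hF : F ∈ properLatFilters C) :
    F ⊆ A ∨ F ⊆ B := by
  by_contra! hAB
  obtain ⟨a, haF, haA⟩ := not_subset.1 hAB.1
  obtain ⟨b, hbF, hbB⟩ := not_subset.1 hAB.2
  have hmF : a ⊓ b ∈ F := hF.1.2.2 a haF b hbF
  have hm0 : a ⊓ b ≠ ⊥ := fun h' => hF.2 (h' ▸ hmF)
  by_cases hmA : a ⊓ b ∈ A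
  · exact haA (h.mem_of_le hmA hm0 inf_le_left)
  · exact hbB (h.symm.mem_of_le (h.mem_right_of_notMem_left hmA) hm0 inf_le_right)

theorem isFilterOf_iff (h : IsHorizSum A B) {F : Set C} :
    IsFilterOf A F ↔ F = A ∨ F ∈ properLatFilters C ∧ F ⊆ A := by
  constructor
  · intro hF
    by_cases hbot : ⊥ ∈ F
    · exact Or.inl (hF.2.1.antisymm fun y hy => hF.2.2.1 ⊥ hbot y hy bot_le)
    · refine Or.inr ⟨⟨⟨hF.1, fun x hx y hxy => ?_, hF.2.2.2⟩, hbot⟩, hF.2.1⟩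
      exact hF.2.2.1 x hx y (h.mem_of_le (hF.2.1 hx) (fun h' => hbot (h' ▸ hx)) hxy) hxy
  · rintro (rfl | ⟨⟨hF, -⟩, hFA⟩)
    · exact ⟨⟨⊤, h.topA⟩, subset_rfl, fun _ _ _ hy _ => hy,
        fun x hx y hy => (h.subA x hx y hy).1⟩
    · exact ⟨hF.1, hFA, fun x hx y _ hxy => hF.2.1 x hx y hxy, hF.2.2⟩

theorem setOf_isFilterOf_eq_insert (h : IsHorizSum A B) : {F : Set C | IsFilterOf A F} =
    insert A {F ∈ properLatFilters C | F ⊆ A} :=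
  ext fun _ => h.isFilterOf_iff

theorem left_notMem_properLatFilters (h : IsHorizSum A B) : A ∉ properLatFilters C :=
  fun hA => hA.2 h.botA

theorem properLatFilters_eq_union (h : IsHorizSum A B) : properLatFilters C =
    {F ∈ properLatFilters C | F ⊆ A} ∪ {F ∈ properLatFilters C | F ⊆ B} := by
  ext F
  exact ⟨fun hF => (h.subset_or_subset hF).imp (⟨hF, ·⟩) (⟨hF, ·⟩),
    fun hF => hF.elim (·.1) (·.1)⟩

theorem properLatFilters_inter (h : IsHorizSum A B) (hbt : (⊥ : C) ≠ ⊤) :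
    {F ∈ properLatFilters C | F ⊆ A} ∩ {F ∈ properLatFilters C | F ⊆ B} = {{⊤}} := by
  ext F
  simp only [mem_inter_iff, mem_sep_iff, mem_singleton_iff]
  constructor
  · rintro ⟨⟨hF, hFA⟩, -, hFB⟩
    have hFAB : F ⊆ {⊥, ⊤} := h.inter ▸ subset_inter hFA hFB
    refine hF.1.1.subset_singleton_iff.1 fun x hx => ?_
    exact (hFAB hx).resolve_left fun h' => hF.2 (h' ▸ hx)
  · rintro rfl
    have hP : {⊤} ∈ properLatFilters C := ⟨isLatFilter_singleton_top, hbt⟩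
    exact ⟨⟨hP, singleton_subset_iff.2 h.topA⟩, hP, singleton_subset_iff.2 h.topB⟩

open Cardinal in
theorem card_latFilter_add_two (h : IsHorizSum A B) (hbt : (⊥ : C) ≠ ⊤) :
    #{F : Set C // IsLatFilter F} + 2 =
      #{F : Set C // IsFilterOf A F} + #{F : Set C // IsFilterOf B F} := by
  have hC : #{F : Set C // IsLatFilter F} = #(properLatFilters C) + 1 := by
    rw [← mk_insert univ_notMem_properLatFilters, ← setOf_isLatFilter_eq_insert]; rfl
  have hA : #{F : Set C // IsFilterOf A F} = #{F ∈ properLatFilters C | F ⊆ A} + 1 := by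
    rw [← mk_insert fun hA => h.left_notMem_properLatFilters hA.1,
      ← h.setOf_isFilterOf_eq_insert]
    rfl
  have hB : #{F : Set C // IsFilterOf B F} = #{F ∈ properLatFilters C | F ⊆ B} + 1 := by
    rw [← mk_insert fun hB => h.symm.left_notMem_properLatFilters hB.1,
      ← h.symm.setOf_isFilterOf_eq_insert]
    rfl
  have hP : #(properLatFilters C) + 1 =
      #{F ∈ properLatFilters C | F ⊆ A} + #{F ∈ properLatFilters C | F ⊆ B} := by
    rw [← mk_union_add_mk_inter, ← h.properLatFilters_eq_union, h.properLatFilters_inter hbt,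
      mk_singleton]
  rw [hC, hA, hB, add_add_add_comm, ← hP, one_add_one_eq_two]

end IsHorizSum

theorem card_filters_ideals_horizSum_general {C : Type*} [Lattice C] [BoundedOrder C]
    (A B : Set C) (hAB : IsHorizSum A B) (hbt : (⊥ : C) ≠ ⊤) :
    Cardinal.mk {F : Set C // IsLatFilter F} + 2 =
      Cardinal.mk {F : Set C // IsFilterOf A F} + Cardinal.mk {F : Set C // IsFilterOf B F} ∧
    Cardinal.mk {I : Set C // IsLatIdeal I} + 2 =
      Cardinal.mk {I : Set C // IsIdealOf A I} + Cardinal.mk {I : Set C // IsIdealOf B I} :=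
  ⟨hAB.card_latFilter_add_two hbt, hAB.dual.card_latFilter_add_two hbt.symm⟩

/-- For nontrivial bounded lattices `A` and `B` each containing an element distinct from
`⊥` and `⊤`, the number of filters of the horizontal sum `A ⊞ B` equals
`|Filt(A)| + |Filt(B)| − 2`, and dually for ideals. -/
theorem card_filters_ideals_horizSum {C : Type*} [Lattice C] [BoundedOrder C]
    (A B : Set C) (hAB : IsHorizSum A B) (hbt : (⊥ : C) ≠ ⊤)
    (hA : ∃ a ∈ A, a ≠ ⊥ ∧ a ≠ ⊤) (hB : ∃ b ∈ B, b ≠ ⊥ ∧ b ≠ ⊤) :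
    Cardinal.mk {F : Set C // IsLatFilter F} + 2 =
      Cardinal.mk {F : Set C // IsFilterOf A F} + Cardinal.mk {F : Set C // IsFilterOf B F} ∧
    Cardinal.mk {I : Set C // IsLatIdeal I} + 2 =
      Cardinal.mk {I : Set C // IsIdealOf A I} + Cardinal.mk {I : Set C // IsIdealOf B I} :=
  card_filters_ideals_horizSum_general A B hAB hbt
end

section
/- Let A, B be bounded lattices with |A| > 2 and |B| > 2. Every prime filter of the horizontal sum A ⊞ B equals A \ {0} or B \ {0}, and every prime ideal of A ⊞ B equals A \ {1} or B \ {1}. -/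
lemma hsSymm {C : Type*} [Lattice C] [BoundedOrder C] {A B : Set C}
    (h : IsHorizSum A B) : IsHorizSum B A where
  botA := h.botB
  topA := h.topB
  botB := h.botA
  topB := h.topA
  subA := h.subB
  subB := h.subA
  union := by rw [Set.union_comm]; exact h.union
  inter := by rw [Set.inter_comm]; exact h.inter
  incomp := fun b hb hb0 hb1 a ha ha0 ha1 => (h.incomp a ha ha0 ha1 b hb hb0 hb1).symm

lemma hsJoinMeet {C : Type*} [Lattice C] [BoundedOrder C] {A B : Set C}
    (h : IsHorizSum A B) {a b : C} (ha : a ∈ A) (ha0 : a ≠ ⊥) (ha1 : a ≠ ⊤)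
    (hb : b ∈ B) (hb0 : b ≠ ⊥) (hb1 : b ≠ ⊤) : a ⊔ b = ⊤ ∧ a ⊓ b = ⊥ := by
  constructor
  · by_contra hne
    have hc : a ⊔ b ∈ A ∪ B := by rw [h.union]; trivial
    have hc0 : a ⊔ b ≠ ⊥ := fun e => ha0 (le_bot_iff.mp (by rw [← e]; exact le_sup_left))
    cases hc with
    | inl hcA => exact (h.incomp _ hcA hc0 hne b hb hb0 hb1).2 le_sup_right
    | inr hcB => exact (h.incomp a ha ha0 ha1 _ hcB hc0 hne).1 le_sup_left
  · by_contra hne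
    have hc : a ⊓ b ∈ A ∪ B := by rw [h.union]; trivial
    have hc1 : a ⊓ b ≠ ⊤ := fun e => ha1 (top_le_iff.mp (by rw [← e]; exact inf_le_left))
    cases hc with
    | inl hcA => exact (h.incomp _ hcA hne hc1 b hb hb0 hb1).1 inf_le_right
    | inr hcB => exact (h.incomp a ha ha0 ha1 _ hcB hne hc1).2 inf_le_left

lemma hsFilter {C : Type*} [Lattice C] [BoundedOrder C] {A B : Set C}
    (h : IsHorizSum A B) (hB : ∃ b ∈ B, b ≠ ⊥ ∧ b ≠ ⊤)
    {P : Set C} (hP : IsPrimeFilter P) {a : C} (haP : a ∈ P) (haA : a ∈ A)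
    (ha0 : a ≠ ⊥) (ha1 : a ≠ ⊤) : P = {x | x ∈ A ∧ x ≠ ⊥} := by
  obtain ⟨⟨hne, hup, hinf⟩, hproper, hprime⟩ := hP
  have hbot : ⊥ ∉ P := fun hb => hproper (Set.eq_univ_of_forall fun x => hup ⊥ hb x bot_le)
  have htop : ⊤ ∈ P := hup a haP ⊤ le_top
  obtain ⟨b, hbB, hb0, hb1⟩ := hB
  have hbP : b ∉ P := fun hbP => hbot (by
    have := hinf a haP b hbP
    rwa [(hsJoinMeet h haA ha0 ha1 hbB hb0 hb1).2] at this)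
  ext x
  constructor
  · intro hxP
    have hx0 : x ≠ ⊥ := fun e => hbot (e ▸ hxP)
    refine ⟨?_, hx0⟩
    by_contra hxA
    have hxB : x ∈ B := by
      have hx : x ∈ A ∪ B := by rw [h.union]; trivial
      exact hx.resolve_left hxA
    have hx1 : x ≠ ⊤ := fun e => hxA (e ▸ h.topA)
    refine hbot ?_
    have := hinf a haP x hxP
    rwa [(hsJoinMeet h haA ha0 ha1 hxB hx0 hx1).2] at this
  · rintro ⟨hxA, hx0⟩
    by_cases hx1 : x = ⊤
    · exact hx1 ▸ htop
    · have he := (hsJoinMeet h hxA hx0 hx1 hbB hb0 hb1).1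
      rcases hprime x b (by rw [he]; exact htop) with hx | hb
      · exact hx
      · exact absurd hb hbP

lemma hsIdeal {C : Type*} [Lattice C] [BoundedOrder C] {A B : Set C}
    (h : IsHorizSum A B) (hB : ∃ b ∈ B, b ≠ ⊥ ∧ b ≠ ⊤)
    {I : Set C} (hI : IsPrimeIdeal I) {a : C} (haI : a ∈ I) (haA : a ∈ A)
    (ha0 : a ≠ ⊥) (ha1 : a ≠ ⊤) : I = {x | x ∈ A ∧ x ≠ ⊤} := by
  obtain ⟨⟨hne, hdn, hsup⟩, hproper, hprime⟩ := hI
  have htop : ⊤ ∉ I := fun ht => hproper (Set.eq_univ_of_forall fun x => hdn ⊤ ht x le_top)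
  have hbot : ⊥ ∈ I := hdn a haI ⊥ bot_le
  obtain ⟨b, hbB, hb0, hb1⟩ := hB
  have hbI : b ∉ I := fun hbI => htop (by
    have := hsup a haI b hbI
    rwa [(hsJoinMeet h haA ha0 ha1 hbB hb0 hb1).1] at this)
  ext x
  constructor
  · intro hxI
    have hx1 : x ≠ ⊤ := fun e => htop (e ▸ hxI)
    refine ⟨?_, hx1⟩
    by_contra hxA
    have hxB : x ∈ B := by
      have hx : x ∈ A ∪ B := by rw [h.union]; trivial
      exact hx.resolve_left hxA
    have hx0 : x ≠ ⊥ := fun e => hxA (e ▸ h.botA)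
    refine htop ?_
    have := hsup a haI x hxI
    rwa [(hsJoinMeet h haA ha0 ha1 hxB hx0 hx1).1] at this
  · rintro ⟨hxA, hx1⟩
    by_cases hx0 : x = ⊥
    · exact hx0 ▸ hbot
    · have he := (hsJoinMeet h hxA hx0 hx1 hbB hb0 hb1).2
      rcases hprime x b (by rw [he]; exact hbot) with hx | hb
      · exact hx
      · exact absurd hb hbI

/-- Every prime filter of the horizontal sum `A ⊞ B` (with `|A|, |B| > 2`) equals
`A \ {⊥}` or `B \ {⊥}`, and every prime ideal equals `A \ {⊤}` or `B \ {⊤}`. -/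
theorem primeSpectra_horizSum {C : Type*} [Lattice C] [BoundedOrder C] (A B : Set C)
    (hAB : IsHorizSum A B) (hbt : (⊥ : C) ≠ ⊤)
    (hA : ∃ a ∈ A, a ≠ ⊥ ∧ a ≠ ⊤) (hB : ∃ b ∈ B, b ≠ ⊥ ∧ b ≠ ⊤) :
    (∀ P : Set C, IsPrimeFilter P →
      P = {x | x ∈ A ∧ x ≠ ⊥} ∨ P = {x | x ∈ B ∧ x ≠ ⊥}) ∧
    (∀ I : Set C, IsPrimeIdeal I →
      I = {x | x ∈ A ∧ x ≠ ⊤} ∨ I = {x | x ∈ B ∧ x ≠ ⊤}) := by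
  obtain ⟨a, haA, ha0, ha1⟩ := hA
  obtain ⟨b, hbB, hb0, hb1⟩ := hB
  constructor
  · intro P hP
    have htop : ⊤ ∈ P := by
      obtain ⟨y, hy⟩ := hP.1.1
      exact hP.1.2.1 y hy ⊤ le_top
    have he := (hsJoinMeet hAB haA ha0 ha1 hbB hb0 hb1).1
    rcases hP.2.2 a b (by rw [he]; exact htop) with haP | hbP
    · exact Or.inl (hsFilter hAB ⟨b, hbB, hb0, hb1⟩ hP haP haA ha0 ha1)
    · exact Or.inr (hsFilter (hsSymm hAB) ⟨a, haA, ha0, ha1⟩ hP hbP hbB hb0 hb1)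
  · intro I hI
    have hbot : ⊥ ∈ I := by
      obtain ⟨y, hy⟩ := hI.1.1
      exact hI.1.2.1 y hy ⊥ bot_le
    have he := (hsJoinMeet hAB haA ha0 ha1 hbB hb0 hb1).2
    rcases hI.2.2 a b (by rw [he]; exact hbot) with haI | hbI
    · exact Or.inl (hsIdeal hAB ⟨b, hbB, hb0, hb1⟩ hI haI haA ha0 ha1)
    · exact Or.inr (hsIdeal (hsSymm hAB) ⟨a, haA, ha0, ha1⟩ hI hbI hbB hb0 hb1)
end

section
/- Let A, B be bounded lattices with |A| > 2 and |B| > 2. Then A \ {0} is a prime filter of A ⊞ B if and only if 0 is meet-irreducible in A and 1 is join-irreducible in B. -/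
/-- `A \ {⊥}` is a prime filter of the horizontal sum `A ⊞ B` (with `|A|, |B| > 2`) iff
`⊥` is meet-irreducible in `A` and `⊤` is join-irreducible in `B`. -/
theorem primeFilter_horizSum_iff {C : Type*} [Lattice C] [BoundedOrder C] (A B : Set C)
    (hAB : IsHorizSum A B) (hbt : (⊥ : C) ≠ ⊤)
    (hA : ∃ a ∈ A, a ≠ ⊥ ∧ a ≠ ⊤) (hB : ∃ b ∈ B, b ≠ ⊥ ∧ b ≠ ⊤) :
    IsPrimeFilter {x | x ∈ A ∧ x ≠ ⊥} ↔
      ((∀ x ∈ A, ∀ y ∈ A, x ⊓ y = ⊥ → x = ⊥ ∨ y = ⊥) ∧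
       (∀ x ∈ B, ∀ y ∈ B, x ⊔ y = ⊤ → x = ⊤ ∨ y = ⊤)) := by
  constructor
  · rintro ⟨⟨-, -, hmeet⟩, -, hprime⟩
    constructor
    · intro x hx y hy hxy
      by_contra h
      push_neg at h
      exact (hmeet x ⟨hx, h.1⟩ y ⟨hy, h.2⟩).2 hxy
    · intro x hx y hy hxy
      have htop : (⊤ : C) ∈ {x | x ∈ A ∧ x ≠ ⊥} := ⟨hAB.topA, Ne.symm hbt⟩
      rcases hprime x y (by rw [hxy]; exact htop) with h | h
      · left
        have hmem : x ∈ A ∩ B := ⟨h.1, hx⟩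
        rw [hAB.inter] at hmem
        rcases hmem with h0 | h1
        · exact absurd h0 h.2
        · exact h1
      · right
        have hmem : y ∈ A ∩ B := ⟨h.1, hy⟩
        rw [hAB.inter] at hmem
        rcases hmem with h0 | h1
        · exact absurd h0 h.2
        · exact h1
  · rintro ⟨hMI, hJI⟩
    refine ⟨⟨⟨⊤, hAB.topA, Ne.symm hbt⟩, ?_, ?_⟩, ?_, ?_⟩
    · rintro x ⟨hxA, hx0⟩ y hxy
      have hy0 : y ≠ ⊥ := fun h => hx0 (le_antisymm (h ▸ hxy) bot_le)
      refine ⟨?_, hy0⟩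
      have hyU : y ∈ A ∪ B := by rw [hAB.union]; trivial
      rcases hyU with hyA | hyB
      · exact hyA
      by_cases hyA : y ∈ A
      · exact hyA
      have hyT : y ≠ ⊤ := fun h => hyA (h ▸ hAB.topA)
      have hxT : x ≠ ⊤ := fun h => hyT (le_antisymm le_top (h ▸ hxy))
      exact absurd hxy ((hAB.incomp x hxA hx0 hxT y hyB hy0 hyT).1)
    · rintro x ⟨hxA, hx0⟩ y ⟨hyA, hy0⟩
      refine ⟨(hAB.subA x hxA y hyA).1, fun h => ?_⟩
      rcases hMI x hxA y hyA h with h | h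
      exacts [hx0 h, hy0 h]
    · intro h
      have hb : (⊥ : C) ∈ {x | x ∈ A ∧ x ≠ ⊥} := h ▸ Set.mem_univ ⊥
      exact hb.2 rfl
    · rintro x y ⟨hxyA, hxy0⟩
      by_cases hx0 : x = ⊥
      · right; subst hx0; rw [bot_sup_eq] at hxyA hxy0; exact ⟨hxyA, hxy0⟩
      by_cases hy0 : y = ⊥
      · left; subst hy0; rw [sup_bot_eq] at hxyA hxy0; exact ⟨hxyA, hxy0⟩
      by_cases hxA : x ∈ A
      · exact Or.inl ⟨hxA, hx0⟩
      by_cases hyA : y ∈ A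
      · exact Or.inr ⟨hyA, hy0⟩
      have hxB : x ∈ B := by
        have : x ∈ A ∪ B := by rw [hAB.union]; trivial
        rcases this with h | h
        exacts [absurd h hxA, h]
      have hyB : y ∈ B := by
        have : y ∈ A ∪ B := by rw [hAB.union]; trivial
        rcases this with h | h
        exacts [absurd h hyA, h]
      have hsB : x ⊔ y ∈ B := (hAB.subB x hxB y hyB).2
      have hmem : x ⊔ y ∈ A ∩ B := ⟨hxyA, hsB⟩
      rw [hAB.inter] at hmem
      rcases hmem with h0 | h1
      · exact absurd h0 hxy0
      rcases hJI x hxB y hyB h1 with h | h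
      · exact absurd (h ▸ hAB.topA) hxA
      · exact absurd (h ▸ hAB.topA) hyA
end

section
/- For any congruence θ of the horizontal sum A ⊞ B of bounded lattices A and B, the restrictions θ ∩ A² and θ ∩ B² are congruences of A and B respectively, and θ is the total congruence ∇ if and only if (0,1) ∈ θ, if and only if θ ∩ A² = ∇_A, if and only if θ ∩ B² = ∇_B. -/
/-- The restriction of a relation `θ` to the sublattice `A` is a congruence of `A`:
an equivalence relation on `A` compatible with `⊔` and `⊓` within `A`. -/
def IsLatCongOn {C : Type*} [Lattice C] (A : Set C) (θ : C → C → Prop) : Prop :=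
  (∀ x ∈ A, θ x x) ∧ (∀ x ∈ A, ∀ y ∈ A, θ x y → θ y x) ∧
  (∀ x ∈ A, ∀ y ∈ A, ∀ z ∈ A, θ x y → θ y z → θ x z) ∧
  (∀ a ∈ A, ∀ b ∈ A, ∀ c ∈ A, ∀ d ∈ A,
    θ a b → θ c d → θ (a ⊔ c) (b ⊔ d) ∧ θ (a ⊓ c) (b ⊓ d))

/-- For any congruence `θ` of the horizontal sum `A ⊞ B`, the restrictions of `θ` to `A`
and to `B` are congruences of `A` and `B` respectively, and `θ` is total iff
`θ ⊥ ⊤`, iff the restriction of `θ` to `A` is total on `A`, iff the restriction of `θ`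
to `B` is total on `B`. -/
theorem cong_restrict_horizSum {C : Type*} [Lattice C] [BoundedOrder C] (A B : Set C)
    (hAB : IsHorizSum A B) (θ : C → C → Prop) (hθ : IsLatCong θ) :
    IsLatCongOn A θ ∧ IsLatCongOn B θ ∧
    ((∀ x y : C, θ x y) ↔ θ ⊥ ⊤) ∧
    (θ ⊥ ⊤ ↔ ∀ a ∈ A, ∀ b ∈ A, θ a b) ∧
    (θ ⊥ ⊤ ↔ ∀ a ∈ B, ∀ b ∈ B, θ a b) := by
  obtain ⟨⟨hrefl, hsymm, htrans⟩, hcomp⟩ := hθ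
  have key : θ ⊥ ⊤ → ∀ x y : C, θ x y := by
    intro h x y
    have hx : θ x ⊤ := by
      have := (hcomp x x ⊥ ⊤ (hrefl x) h).1
      simpa using this
    have hy : θ y ⊤ := by
      have := (hcomp y y ⊥ ⊤ (hrefl y) h).1
      simpa using this
    exact htrans hx (hsymm hy)
  refine ⟨⟨fun x _ => hrefl x, fun x _ y _ h => hsymm h,
      fun x _ y _ z _ h1 h2 => htrans h1 h2,
      fun a _ b _ c _ d _ h1 h2 => hcomp a b c d h1 h2⟩,
    ⟨fun x _ => hrefl x, fun x _ y _ h => hsymm h,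
      fun x _ y _ z _ h1 h2 => htrans h1 h2,
      fun a _ b _ c _ d _ h1 h2 => hcomp a b c d h1 h2⟩,
    ⟨fun h => h ⊥ ⊤, key⟩,
    ⟨fun h a _ b _ => key h a b, fun h => h ⊥ hAB.botA ⊤ hAB.topA⟩,
    ⟨fun h a _ b _ => key h a b, fun h => h ⊥ hAB.botB ⊤ hAB.topB⟩⟩
end

section
/- Let A, B be bounded lattices with |A| > 2 and |B| > 2, and let θ be a congruence of A ⊞ B that is neither the total congruence nor has both 0/θ = {0} and 1/θ = {1}. Then θ = eq(A \ {0}, B \ {1}) or θ = eq(A \ {1}, B \ {0}), i.e., θ is one of the (at most) two two-class congruences. -/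
lemma IsHorizSum.symm' {C : Type*} [Lattice C] [BoundedOrder C] {A B : Set C}
    (h : IsHorizSum A B) : IsHorizSum B A :=
  ⟨h.botB, h.topB, h.botA, h.topA, h.subB, h.subA,
   by rw [Set.union_comm]; exact h.union,
   by rw [Set.inter_comm]; exact h.inter,
   fun b hb hb0 hb1 a ha ha0 ha1 => (h.incomp a ha ha0 ha1 b hb hb0 hb1).symm⟩

lemma horiz_sup_inf {C : Type*} [Lattice C] [BoundedOrder C] {A B : Set C}
    (h : IsHorizSum A B) {a b : C} (haA : a ∈ A) (ha0 : a ≠ ⊥) (ha1 : a ≠ ⊤)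
    (hbB : b ∈ B) (hb0 : b ≠ ⊥) (hb1 : b ≠ ⊤) : a ⊔ b = ⊤ ∧ a ⊓ b = ⊥ := by
  constructor
  · by_contra hs
    have hsne : a ⊔ b ≠ ⊥ := fun he => ha0 (le_bot_iff.1 (he ▸ le_sup_left))
    have hmem : a ⊔ b ∈ A ∪ B := by
      have := Set.mem_univ (a ⊔ b); rwa [← h.union] at this
    rcases hmem with hsA | hsB
    · exact (h.incomp _ hsA hsne hs b hbB hb0 hb1).2 le_sup_right
    · exact (h.incomp a haA ha0 ha1 _ hsB hsne hs).1 le_sup_left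
  · by_contra hs
    have hsne : a ⊓ b ≠ ⊤ := fun he => ha1 (top_le_iff.1 (he ▸ inf_le_left))
    have hmem : a ⊓ b ∈ A ∪ B := by
      have := Set.mem_univ (a ⊓ b); rwa [← h.union] at this
    rcases hmem with hsA | hsB
    · exact (h.incomp _ hsA hs hsne b hbB hb0 hb1).1 inf_le_right
    · exact (h.incomp a haA ha0 ha1 _ hsB hs hsne).2 inf_le_left

lemma horiz_compl {C : Type*} [Lattice C] [BoundedOrder C] {A B : Set C}
    (h : IsHorizSum A B) (hbt : (⊥ : C) ≠ ⊤) (z : C) :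
    (z ∈ B ∧ z ≠ ⊤) ↔ ¬ (z ∈ A ∧ z ≠ ⊥) := by
  constructor
  · rintro ⟨hzB, hz1⟩ ⟨hzA, hz0⟩
    have hmem : z ∈ ({⊥, ⊤} : Set C) := h.inter ▸ Set.mem_inter hzA hzB
    simp only [Set.mem_insert_iff, Set.mem_singleton_iff] at hmem
    rcases hmem with h0 | h1
    · exact hz0 h0
    · exact hz1 h1
  · intro hn
    rcases not_and_or.1 hn with hzA | hz0
    · have hzB : z ∈ B := by
        have := Set.mem_univ z; rw [← h.union] at this
        rcases this with hz | hz
        · exact absurd hz hzA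
        · exact hz
      exact ⟨hzB, fun he => hzA (he ▸ h.topA)⟩
    · rw [not_not] at hz0
      exact ⟨hz0 ▸ h.botB, hz0 ▸ hbt⟩

lemma horiz_key {C : Type*} [Lattice C] [BoundedOrder C] {A B : Set C}
    (hAB : IsHorizSum A B) {θ : C → C → Prop} (hθ : IsLatCong θ) (hnbt : ¬ θ ⊥ ⊤)
    {q : C} (hqA : q ∈ A) (hq0 : q ≠ ⊥) (hq1 : q ≠ ⊤) (hθq : θ ⊥ q)
    (hB : ∃ b ∈ B, b ≠ ⊥ ∧ b ≠ ⊤) :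
    ∀ x y : C, θ x y ↔ ((x ∈ A ∧ x ≠ ⊤) ↔ (y ∈ A ∧ y ≠ ⊤)) := by
  obtain ⟨heq, hcomp⟩ := hθ
  obtain ⟨b₀, hb₀B, hb₀0, hb₀1⟩ := hB
  have step1 : ∀ b ∈ B, b ≠ ⊥ → θ b ⊤ := by
    intro b hbB hb0
    by_cases hb1 : b = ⊤
    · exact hb1 ▸ heq.refl ⊤
    · have h := (hcomp ⊥ q b b hθq (heq.refl b)).1
      rwa [bot_sup_eq, (horiz_sup_inf hAB hqA hq0 hq1 hbB hb0 hb1).1] at h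
  have step2 : ∀ a ∈ A, a ≠ ⊤ → θ ⊥ a := by
    intro a haA ha1
    by_cases ha0 : a = ⊥
    · exact ha0 ▸ heq.refl ⊥
    · have h := (hcomp b₀ ⊤ a a (step1 b₀ hb₀B hb₀0) (heq.refl a)).2
      rw [top_inf_eq, inf_comm b₀ a,
        (horiz_sup_inf hAB haA ha0 ha1 hb₀B hb₀0 hb₀1).2] at h
      exact h
  have keyA : ∀ x : C, x ∈ A ∧ x ≠ ⊤ → θ ⊥ x := fun x hx => step2 x hx.1 hx.2
  have keyB : ∀ x : C, ¬ (x ∈ A ∧ x ≠ ⊤) → θ x ⊤ := by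
    intro x hx
    rcases not_and_or.1 hx with hxA | hx1
    · have hxB : x ∈ B := by
        have := Set.mem_univ x; rw [← hAB.union] at this
        rcases this with h | h
        · exact absurd h hxA
        · exact h
      exact step1 x hxB (fun he => hxA (he ▸ hAB.botA))
    · rw [not_not] at hx1; exact hx1 ▸ heq.refl ⊤
  intro x y
  constructor
  · intro hxy
    constructor
    · intro hx
      by_contra hy
      exact hnbt (heq.trans (keyA x hx) (heq.trans hxy (keyB y hy)))
    · intro hy
      by_contra hx
      exact hnbt (heq.trans (keyA y hy) (heq.trans (heq.symm hxy) (keyB x hx)))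
  · intro h
    by_cases hx : x ∈ A ∧ x ≠ ⊤
    · exact heq.trans (heq.symm (keyA x hx)) (keyA y (h.1 hx))
    · exact heq.trans (keyB x hx) (heq.symm (keyB y (fun hy => hx (h.2 hy))))

/-- Let `θ` be a congruence of the horizontal sum `A ⊞ B` (with `|A|, |B| > 2`) that is
neither total nor has both singleton classes at `⊥` and `⊤`. Then `θ` is one of the (at
most) two two-class congruences: `eq(A \ {⊥}, B \ {⊤})` or `eq(A \ {⊤}, B \ {⊥})`. -/
theorem cong_horizSum_twoClass {C : Type*} [Lattice C] [BoundedOrder C] (A B : Set C)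
    (hAB : IsHorizSum A B) (hbt : (⊥ : C) ≠ ⊤)
    (hA : ∃ a ∈ A, a ≠ ⊥ ∧ a ≠ ⊤) (hB : ∃ b ∈ B, b ≠ ⊥ ∧ b ≠ ⊤)
    (θ : C → C → Prop) (hθ : IsLatCong θ)
    (hnt : ¬ ∀ x y : C, θ x y)
    (hn01 : ¬ ((∀ x : C, θ x ⊥ → x = ⊥) ∧ (∀ x : C, θ x ⊤ → x = ⊤))) :
    (∀ x y : C, θ x y ↔ ((x ∈ A ∧ x ≠ ⊥) ↔ (y ∈ A ∧ y ≠ ⊥))) ∨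
    (∀ x y : C, θ x y ↔ ((x ∈ A ∧ x ≠ ⊤) ↔ (y ∈ A ∧ y ≠ ⊤))) := by
  have hnbt : ¬ θ ⊥ ⊤ := by
    intro hbtθ
    apply hnt
    have hall : ∀ x : C, θ ⊥ x := by
      intro x
      have h := (hθ.2 ⊥ ⊤ x x hbtθ (hθ.1.refl x)).2
      rwa [bot_inf_eq, top_inf_eq] at h
    exact fun x y => hθ.1.trans (hθ.1.symm (hall x)) (hall y)
  have caseA : ∀ q ∈ A, q ≠ ⊥ → q ≠ ⊤ → θ ⊥ q →
      (∀ x y : C, θ x y ↔ ((x ∈ A ∧ x ≠ ⊥) ↔ (y ∈ A ∧ y ≠ ⊥))) ∨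
      (∀ x y : C, θ x y ↔ ((x ∈ A ∧ x ≠ ⊤) ↔ (y ∈ A ∧ y ≠ ⊤))) :=
    fun q hq h0 h1 hθq => Or.inr (horiz_key hAB hθ hnbt hq h0 h1 hθq hB)
  have caseB : ∀ q ∈ B, q ≠ ⊥ → q ≠ ⊤ → θ ⊥ q →
      (∀ x y : C, θ x y ↔ ((x ∈ A ∧ x ≠ ⊥) ↔ (y ∈ A ∧ y ≠ ⊥))) ∨
      (∀ x y : C, θ x y ↔ ((x ∈ A ∧ x ≠ ⊤) ↔ (y ∈ A ∧ y ≠ ⊤))) := by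
    intro q hq h0 h1 hθq
    left
    have h := horiz_key hAB.symm' hθ hnbt hq h0 h1 hθq hA
    intro x y
    rw [h x y, horiz_compl hAB hbt x, horiz_compl hAB hbt y, not_iff_not]
  rcases not_and_or.1 hn01 with h0 | h1
  · push_neg at h0
    obtain ⟨x, hxθ, hx0⟩ := h0
    have hθx : θ ⊥ x := hθ.1.symm hxθ
    have hx1 : x ≠ ⊤ := fun he => hnbt (he ▸ hθx)
    have hmem : x ∈ A ∪ B := by
      have := Set.mem_univ x; rwa [← hAB.union] at this
    rcases hmem with hxA | hxB
    · exact caseA x hxA hx0 hx1 hθx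
    · exact caseB x hxB hx0 hx1 hθx
  · push_neg at h1
    obtain ⟨x, hxθ, hx1⟩ := h1
    have hx0 : x ≠ ⊥ := fun he => hnbt (he ▸ hxθ)
    have hmem : x ∈ A ∪ B := by
      have := Set.mem_univ x; rwa [← hAB.union] at this
    rcases hmem with hxA | hxB
    · obtain ⟨b₀, hbB, hb0, hb1⟩ := hB
      have h := (hθ.2 x ⊤ b₀ b₀ hxθ (hθ.1.refl b₀)).2
      rw [top_inf_eq, (horiz_sup_inf hAB hxA hx0 hx1 hbB hb0 hb1).2] at h
      exact caseB b₀ hbB hb0 hb1 h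
    · obtain ⟨a₀, haA, ha0, ha1⟩ := hA
      have h := (hθ.2 x ⊤ a₀ a₀ hxθ (hθ.1.refl a₀)).2
      rw [top_inf_eq, inf_comm x a₀,
        (horiz_sup_inf hAB haA ha0 ha1 hxB hx0 hx1).2] at h
      exact caseA a₀ haA ha0 ha1 h
end

section
/- Let (A_i)_{i∈I} be a family of nontrivial bounded lattices such that at least three of them have more than two elements. Then the horizontal sum H = ⊞_{i∈I} A_i has no prime filters and no prime ideals, and Con(H) = Con₀₁(H) ∪ {∇_H}. -/
/-- `C` is the horizontal sum of the family of subsets `A i`: each is a bounded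
sublattice, they cover `C`, distinct members intersect exactly in `{⊥, ⊤}`, and elements
of distinct summands other than `⊥, ⊤` are incomparable. -/
structure IsHorizSumFamily {C ι : Type*} [Lattice C] [BoundedOrder C]
    (A : ι → Set C) : Prop where
  bot : ∀ i, ⊥ ∈ A i
  top : ∀ i, ⊤ ∈ A i
  sub : ∀ i, ∀ x ∈ A i, ∀ y ∈ A i, x ⊓ y ∈ A i ∧ x ⊔ y ∈ A i
  union : (⋃ i, A i) = Set.univ
  inter : ∀ i j, i ≠ j → A i ∩ A j = {⊥, ⊤}
  incomp : ∀ i j, i ≠ j → ∀ a ∈ A i, a ≠ ⊥ → a ≠ ⊤ →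
    ∀ b ∈ A j, b ≠ ⊥ → b ≠ ⊤ → ¬ a ≤ b

section Aux
variable {C ι : Type*} [Lattice C] [BoundedOrder C] {A : ι → Set C}

lemma hsf_mem_exists (hA : IsHorizSumFamily A) (x : C) : ∃ i, x ∈ A i := by
  have hx : x ∈ ⋃ i, A i := by rw [hA.union]; trivial
  simpa using hx

lemma hsf_sup_eq_top (hA : IsHorizSumFamily A) {i j : ι} (hij : i ≠ j)
    {a b : C} (ha : a ∈ A i) (ha0 : a ≠ ⊥) (ha1 : a ≠ ⊤)
    (hb : b ∈ A j) (hb0 : b ≠ ⊥) (hb1 : b ≠ ⊤) : a ⊔ b = ⊤ := by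
  by_contra hs1
  have hs0 : a ⊔ b ≠ ⊥ := fun h => ha0 (le_bot_iff.mp (h ▸ le_sup_left))
  obtain ⟨l, hl⟩ := hsf_mem_exists hA (a ⊔ b)
  have hli : a ⊔ b ∈ A i := by
    by_cases h : l = i
    · exact h ▸ hl
    · exact absurd le_sup_left
        (hA.incomp i l (fun h' => h h'.symm) a ha ha0 ha1 _ hl hs0 hs1)
  have hlj : a ⊔ b ∈ A j := by
    by_cases h : l = j
    · exact h ▸ hl
    · exact absurd le_sup_right
        (hA.incomp j l (fun h' => h h'.symm) b hb hb0 hb1 _ hl hs0 hs1)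
  have : a ⊔ b ∈ ({⊥, ⊤} : Set C) := hA.inter i j hij ▸ ⟨hli, hlj⟩
  rcases this with h | h
  · exact hs0 h
  · exact hs1 h

lemma hsf_inf_eq_bot (hA : IsHorizSumFamily A) {i j : ι} (hij : i ≠ j)
    {a b : C} (ha : a ∈ A i) (ha0 : a ≠ ⊥) (ha1 : a ≠ ⊤)
    (hb : b ∈ A j) (hb0 : b ≠ ⊥) (hb1 : b ≠ ⊤) : a ⊓ b = ⊥ := by
  by_contra hs0
  have hs1 : a ⊓ b ≠ ⊤ := fun h => ha1 (top_le_iff.mp (h ▸ inf_le_left))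
  obtain ⟨l, hl⟩ := hsf_mem_exists hA (a ⊓ b)
  have hli : a ⊓ b ∈ A i := by
    by_cases h : l = i
    · exact h ▸ hl
    · exact absurd inf_le_left (hA.incomp l i h _ hl hs0 hs1 a ha ha0 ha1)
  have hlj : a ⊓ b ∈ A j := by
    by_cases h : l = j
    · exact h ▸ hl
    · exact absurd inf_le_right (hA.incomp l j h _ hl hs0 hs1 b hb hb0 hb1)
  have : a ⊓ b ∈ ({⊥, ⊤} : Set C) := hA.inter i j hij ▸ ⟨hli, hlj⟩
  rcases this with h | h
  · exact hs0 h
  · exact hs1 h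

end Aux


/-- If at least three summands of a horizontal sum `H = ⊞_{i∈I} A_i` of nontrivial
bounded lattices have more than two elements, then `H` has no prime filters and no prime
ideals, and every congruence of `H` is either total or has singleton classes at `⊥` and
`⊤`. -/
theorem horizSumFamily_three_summands {C ι : Type*} [Lattice C] [BoundedOrder C]
    (A : ι → Set C) (hA : IsHorizSumFamily A) (hbt : (⊥ : C) ≠ ⊤)
    (h3 : ∃ i j k : ι, i ≠ j ∧ i ≠ k ∧ j ≠ k ∧
      (∃ a ∈ A i, a ≠ ⊥ ∧ a ≠ ⊤) ∧ (∃ a ∈ A j, a ≠ ⊥ ∧ a ≠ ⊤) ∧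
      (∃ a ∈ A k, a ≠ ⊥ ∧ a ≠ ⊤)) :
    (∀ P : Set C, ¬ IsPrimeFilter P) ∧ (∀ I : Set C, ¬ IsPrimeIdeal I) ∧
    (∀ θ : C → C → Prop, IsLatCong θ →
      (∀ x y : C, θ x y) ∨
      ((∀ x : C, θ x ⊥ → x = ⊥) ∧ (∀ x : C, θ x ⊤ → x = ⊤))) := by
  obtain ⟨i0, j0, k0, hij, hik, hjk, ⟨a, hai, ha0, ha1⟩, ⟨b, hbj, hb0, hb1⟩,
    ⟨c, hck, hc0, hc1⟩⟩ := h3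
  -- pairwise sup/inf facts
  have sab : a ⊔ b = ⊤ := hsf_sup_eq_top hA hij hai ha0 ha1 hbj hb0 hb1
  have sac : a ⊔ c = ⊤ := hsf_sup_eq_top hA hik hai ha0 ha1 hck hc0 hc1
  have sbc : b ⊔ c = ⊤ := hsf_sup_eq_top hA hjk hbj hb0 hb1 hck hc0 hc1
  have iab : a ⊓ b = ⊥ := hsf_inf_eq_bot hA hij hai ha0 ha1 hbj hb0 hb1
  have iac : a ⊓ c = ⊥ := hsf_inf_eq_bot hA hik hai ha0 ha1 hck hc0 hc1
  have ibc : b ⊓ c = ⊥ := hsf_inf_eq_bot hA hjk hbj hb0 hb1 hck hc0 hc1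
  -- for any index m, pick two other summands with nontrivial elements
  have pick : ∀ m : ι, ∃ p q, p ≠ q ∧ m ≠ p ∧ m ≠ q ∧
      (∃ u ∈ A p, u ≠ ⊥ ∧ u ≠ ⊤) ∧ (∃ u ∈ A q, u ≠ ⊥ ∧ u ≠ ⊤) := by
    intro m
    by_cases h1 : m = i0
    · exact ⟨j0, k0, hjk, h1 ▸ hij, h1 ▸ hik, ⟨b, hbj, hb0, hb1⟩, ⟨c, hck, hc0, hc1⟩⟩
    · by_cases h2 : m = j0
      · exact ⟨i0, k0, hik, h1, h2 ▸ hjk,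
          ⟨a, hai, ha0, ha1⟩, ⟨c, hck, hc0, hc1⟩⟩
      · exact ⟨i0, j0, hij, h1, h2, ⟨a, hai, ha0, ha1⟩, ⟨b, hbj, hb0, hb1⟩⟩
  refine ⟨?_, ?_, ?_⟩
  · -- no prime filters
    rintro P ⟨⟨⟨x, hx⟩, hup, hmeet⟩, hproper, hprime⟩
    have htop : ⊤ ∈ P := hup x hx ⊤ le_top
    have hbot : ⊥ ∉ P := fun h =>
      hproper (Set.eq_univ_of_forall fun y => hup ⊥ h y bot_le)
    have h1 := hprime a b (sab ▸ htop)
    have h2 := hprime a c (sac ▸ htop)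
    have h3' := hprime b c (sbc ▸ htop)
    rcases h1 with h1 | h1 <;> rcases h2 with h2 | h2 <;> rcases h3' with h3' | h3'
    · exact hbot (iab ▸ hmeet a h1 b h3')
    · exact hbot (iac ▸ hmeet a h1 c h3')
    · exact hbot (iab ▸ hmeet a h1 b h3')
    · exact hbot (iac ▸ hmeet a h1 c h3')
    · exact hbot (iab ▸ hmeet a h2 b h1)
    · exact hbot (iac ▸ hmeet a h2 c h3')
    · exact hbot (ibc ▸ hmeet b h1 c h2)
    · exact hbot (ibc ▸ hmeet b h1 c h2)
  · -- no prime ideals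
    rintro I ⟨⟨⟨x, hx⟩, hdn, hjoin⟩, hproper, hprime⟩
    have hbot : ⊥ ∈ I := hdn x hx ⊥ bot_le
    have htop : ⊤ ∉ I := fun h =>
      hproper (Set.eq_univ_of_forall fun y => hdn ⊤ h y le_top)
    have h1 := hprime a b (iab ▸ hbot)
    have h2 := hprime a c (iac ▸ hbot)
    have h3' := hprime b c (ibc ▸ hbot)
    rcases h1 with h1 | h1 <;> rcases h2 with h2 | h2 <;> rcases h3' with h3' | h3'
    · exact htop (sab ▸ hjoin a h1 b h3')
    · exact htop (sac ▸ hjoin a h1 c h3')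
    · exact htop (sab ▸ hjoin a h1 b h3')
    · exact htop (sac ▸ hjoin a h1 c h3')
    · exact htop (sab ▸ hjoin a h2 b h1)
    · exact htop (sac ▸ hjoin a h2 c h3')
    · exact htop (sbc ▸ hjoin b h1 c h2)
    · exact htop (sbc ▸ hjoin b h1 c h2)
  · -- congruences
    rintro θ ⟨heq, hcomp⟩
    -- if θ ⊥ ⊤ then θ is total
    have total : θ ⊥ ⊤ → ∀ x y : C, θ x y := by
      intro h x y
      have hx : θ x ⊤ := by
        have := (hcomp x x ⊥ ⊤ (heq.refl x) h).1
        simpa using this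
      have hy : θ y ⊤ := by
        have := (hcomp y y ⊥ ⊤ (heq.refl y) h).1
        simpa using this
      exact heq.trans hx (heq.symm hy)
    -- from a nontrivial element collapsed to ⊥ or ⊤, derive θ ⊥ ⊤
    have keybot : ∀ x : C, x ≠ ⊥ → θ x ⊥ → θ ⊥ ⊤ := by
      intro x hx0 hx
      by_cases hx1 : x = ⊤
      · exact heq.symm (hx1 ▸ hx)
      obtain ⟨m, hm⟩ := hsf_mem_exists hA x
      obtain ⟨p, q, hpq, hmp, hmq, ⟨u, hu, hu0, hu1⟩, ⟨v, hv, hv0, hv1⟩⟩ := pick m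
      have sxu : x ⊔ u = ⊤ := hsf_sup_eq_top hA hmp hm hx0 hx1 hu hu0 hu1
      have sxv : x ⊔ v = ⊤ := hsf_sup_eq_top hA hmq hm hx0 hx1 hv hv0 hv1
      have htu : θ ⊤ u := by
        have := (hcomp x ⊥ u u hx (heq.refl u)).1
        rw [sxu, bot_sup_eq] at this; exact this
      have htv : θ ⊤ v := by
        have := (hcomp x ⊥ v v hx (heq.refl v)).1
        rw [sxv, bot_sup_eq] at this; exact this
      have huv : θ u v := heq.trans (heq.symm htu) htv
      have hbv : θ ⊥ v := by
        have := (hcomp u v v v huv (heq.refl v)).2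
        rw [hsf_inf_eq_bot hA hpq hu hu0 hu1 hv hv0 hv1, inf_idem] at this
        exact this
      exact heq.trans hbv (heq.symm htv)
    have keytop : ∀ x : C, x ≠ ⊤ → θ x ⊤ → θ ⊥ ⊤ := by
      intro x hx1 hx
      by_cases hx0 : x = ⊥
      · exact hx0 ▸ hx
      obtain ⟨m, hm⟩ := hsf_mem_exists hA x
      obtain ⟨p, q, hpq, hmp, hmq, ⟨u, hu, hu0, hu1⟩, ⟨v, hv, hv0, hv1⟩⟩ := pick m
      have ixu : x ⊓ u = ⊥ := hsf_inf_eq_bot hA hmp hm hx0 hx1 hu hu0 hu1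
      have ixv : x ⊓ v = ⊥ := hsf_inf_eq_bot hA hmq hm hx0 hx1 hv hv0 hv1
      have hbu : θ ⊥ u := by
        have := (hcomp x ⊤ u u hx (heq.refl u)).2
        rw [ixu, top_inf_eq] at this; exact this
      have hbv : θ ⊥ v := by
        have := (hcomp x ⊤ v v hx (heq.refl v)).2
        rw [ixv, top_inf_eq] at this; exact this
      have huv : θ u v := heq.trans (heq.symm hbu) hbv
      have htv : θ ⊤ v := by
        have := (hcomp u v v v huv (heq.refl v)).1
        rw [hsf_sup_eq_top hA hpq hu hu0 hu1 hv hv0 hv1, sup_idem] at this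
        exact this
      exact heq.trans hbv (heq.symm htv)
    by_cases hb' : ∀ x : C, θ x ⊥ → x = ⊥
    · by_cases ht' : ∀ x : C, θ x ⊤ → x = ⊤
      · exact Or.inr ⟨hb', ht'⟩
      · push_neg at ht'
        obtain ⟨x, hx, hx1⟩ := ht'
        exact Or.inl (total (keytop x hx1 hx))
    · push_neg at hb'
      obtain ⟨x, hx, hx0⟩ := hb'
      exact Or.inl (total (keybot x hx0 hx))
end
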